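/- arXiv:2512.13443 — 5 statements merged into one kernel-verified Lean document; each statement's English description precedes it below -/
import Mathlib

section
/- Let H be a complex Hilbert space, A a bounded self-adjoint operator on H with A ≥ 0, and let κ > 0, γ > 0. Then for every z ∈ ℂ with Re z = −κ + γ·|Im z|, the operator z·I − A is boundedly invertible, and one has the operator-norm bounds ‖A ∘ (z·I − A)⁻¹‖ ≤ √(1+γ²) and ‖A^{1/2} ∘ (z·I − A)⁻¹‖ ≤ √((1+γ²)/κ), where A^{1/2} denotes the positive square root of A. -/
/-!
For `t ≥ 0`, Cauchy–Schwarz applied to `t + κ = (t - Re z) + γ |Im z|` gives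
`(t + κ)² ≤ (1 + γ²) |z - t|²`. Hence `z` avoids the spectrum `σ(A) ⊆ [0, ∞)`, and on `σ(A)`
the functions `t / |z - t|` and `t / |z - t|²` are bounded by `√(1 + γ²)` and `(1 + γ²) / κ`.
The continuous functional calculus turns these into the two operator bounds, the second one
through the C⋆-identity `‖A^{1/2} R‖² = ‖R⋆ A R‖` for `R = (z - A)⁻¹`.
-/

open ContinuousLinearMap ComplexOrder

section ContourGeometry

variable {κ γ : ℝ} {z : ℂ}

theorem sq_add_le_mul_norm_sub_ofReal_sq (hz : z.re = -κ + γ * |z.im|) (t : ℝ) :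
    (t + κ) ^ 2 ≤ (1 + γ ^ 2) * ‖z - t‖ ^ 2 := by
  have hnorm : ‖z - t‖ ^ 2 = (t - z.re) ^ 2 + |z.im| ^ 2 := by
    rw [Complex.sq_norm, Complex.normSq_apply, sq_abs]
    simp only [Complex.sub_re, Complex.sub_im, Complex.ofReal_re, Complex.ofReal_im, sub_zero]
    ring
  have hsum : t + κ = (t - z.re) + γ * |z.im| := by rw [hz]; ring
  rw [hnorm, hsum]
  nlinarith [sq_nonneg (γ * (t - z.re) - |z.im|)]

theorem norm_sub_ofReal_pos (hz : z.re = -κ + γ * |z.im|) (hκ : 0 < κ) {t : ℝ} (ht : 0 ≤ t) :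
    0 < ‖z - t‖ := by
  refine (norm_nonneg _).lt_of_ne fun h ↦ ?_
  have := sq_add_le_mul_norm_sub_ofReal_sq hz t
  rw [← h] at this
  nlinarith

theorem norm_ofReal_mul_inv_sub_le (hz : z.re = -κ + γ * |z.im|) (hκ : 0 < κ) {t : ℝ}
    (ht : 0 ≤ t) : ‖(t : ℂ) * (z - t)⁻¹‖ ≤ √(1 + γ ^ 2) := by
  have hpos := norm_sub_ofReal_pos hz hκ ht
  rw [norm_mul, norm_inv, Complex.norm_of_nonneg ht, ← div_eq_mul_inv, div_le_iff₀ hpos]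
  have hsq := Real.sq_sqrt (show 0 ≤ 1 + γ ^ 2 by positivity)
  nlinarith [sq_add_le_mul_norm_sub_ofReal_sq hz t, Real.sqrt_nonneg (1 + γ ^ 2),
    mul_nonneg (Real.sqrt_nonneg (1 + γ ^ 2)) hpos.le]

theorem norm_star_inv_sub_mul_ofReal_mul_inv_sub_le (hz : z.re = -κ + γ * |z.im|) (hκ : 0 < κ)
    {t : ℝ} (ht : 0 ≤ t) : ‖star (z - t)⁻¹ * t * (z - t)⁻¹‖ ≤ (1 + γ ^ 2) / κ := by
  have hpos := norm_sub_ofReal_pos hz hκ ht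
  have hbound : t * κ ≤ (1 + γ ^ 2) * ‖z - t‖ ^ 2 := by
    nlinarith [sq_add_le_mul_norm_sub_ofReal_sq hz t]
  rw [norm_mul, norm_mul, norm_star, norm_inv, Complex.norm_of_nonneg ht, le_div_iff₀ hκ]
  calc ‖z - t‖⁻¹ * t * ‖z - t‖⁻¹ * κ = t * κ / ‖z - t‖ ^ 2 := by field_simp
    _ ≤ 1 + γ ^ 2 := by rwa [div_le_iff₀ (by positivity)]

end ContourGeometry

section CStarAlgebra

variable {𝒜 : Type*} [CStarAlgebra 𝒜]

theorem exists_ofReal_eq_of_mem_spectrum_of_nonneg [PartialOrder 𝒜] [StarOrderedRing 𝒜]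
    {a : 𝒜} (ha : 0 ≤ a) {x : ℂ} (hx : x ∈ spectrum ℂ a) : ∃ t : ℝ, 0 ≤ t ∧ (t : ℂ) = x := by
  obtain ⟨hre, him⟩ := Complex.nonneg_iff.1 (spectrum_nonneg_of_nonneg ha hx)
  exact ⟨x.re, hre, Complex.ext rfl (by simpa using him)⟩

theorem ring_inverse_smul_one_sub_eq_cfc {a : 𝒜} {z : ℂ} (hz : z ∉ spectrum ℂ a)
    (ha : IsStarNormal a := by cfc_tac) :
    Ring.inverse (z • 1 - a) = cfc (fun x ↦ (z - x)⁻¹) a := by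
  have hne : ∀ x ∈ spectrum ℂ a, z - x ≠ 0 := fun x hx h ↦ hz (sub_eq_zero.1 h ▸ hx)
  rw [cfc_inv (fun x ↦ z - x) a hne, cfc_sub .., cfc_const z a, cfc_id' ℂ a,
    Algebra.algebraMap_eq_smul_one]

theorem mul_cfc_eq_cfc_id_mul (f : ℂ → ℂ) (a : 𝒜)
    (hf : ContinuousOn f (spectrum ℂ a) := by cfc_cont_tac) (ha : IsStarNormal a := by cfc_tac) :
    a * cfc f a = cfc (fun x ↦ x * f x) a := by
  rw [cfc_mul .., cfc_id' ℂ a]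

theorem star_cfc_mul_mul_cfc (f : ℂ → ℂ) (a : 𝒜)
    (hf : ContinuousOn f (spectrum ℂ a) := by cfc_cont_tac) (ha : IsStarNormal a := by cfc_tac) :
    star (cfc f a) * a * cfc f a = cfc (fun x ↦ star (f x) * x * f x) a := by
  rw [cfc_mul .., cfc_mul .., cfc_star, cfc_id' ℂ a]

theorem norm_mul_sq_eq_norm_star_mul_mul_self_mul {s : 𝒜} (hs : IsSelfAdjoint s) (b : 𝒜) :
    ‖s * b‖ ^ 2 = ‖star b * (s * s) * b‖ := by
  rw [sq, ← CStarRing.norm_star_mul_self, star_mul, hs.star_eq, mul_assoc, mul_assoc, mul_assoc]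

end CStarAlgebra

theorem operator_resolvent_estimates_on_contour_general
    {H : Type*} [NormedAddCommGroup H] [InnerProductSpace ℂ H] [CompleteSpace H]
    (A sqrtA : H →L[ℂ] H) (hA : A.IsPositive)
    (hsqrt : sqrtA.IsPositive) (hsqrt2 : sqrtA * sqrtA = A)
    (κ γ : ℝ) (hκ : 0 < κ)
    (z : ℂ) (hz : z.re = -κ + γ * |z.im|) :
    IsUnit (z • (1 : H →L[ℂ] H) - A) ∧
    ‖A * Ring.inverse (z • (1 : H →L[ℂ] H) - A)‖ ≤ Real.sqrt (1 + γ ^ 2) ∧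
    ‖sqrtA * Ring.inverse (z • (1 : H →L[ℂ] H) - A)‖ ≤ Real.sqrt ((1 + γ ^ 2) / κ) := by
  have hA0 : 0 ≤ A := (nonneg_iff_isPositive A).2 hA
  have hnormal : IsStarNormal A := hA.isSelfAdjoint.isStarNormal
  have hz_notMem : z ∉ spectrum ℂ A := fun hzA ↦ by
    obtain ⟨t, ht, rfl⟩ := exists_ofReal_eq_of_mem_spectrum_of_nonneg hA0 hzA
    simpa using (norm_sub_ofReal_pos hz hκ ht).ne'
  have hcont : ContinuousOn (fun x ↦ (z - x)⁻¹) (spectrum ℂ A) :=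
    ContinuousOn.inv₀ (by fun_prop) fun x hx h ↦ hz_notMem (sub_eq_zero.1 h ▸ hx)
  have hR := ring_inverse_smul_one_sub_eq_cfc hz_notMem
  refine ⟨by simpa [Algebra.algebraMap_eq_smul_one] using spectrum.notMem_iff.1 hz_notMem, ?_, ?_⟩
  · rw [hR, mul_cfc_eq_cfc_id_mul _ _ hcont]
    refine norm_cfc_le (Real.sqrt_nonneg _) fun x hx ↦ ?_
    obtain ⟨t, ht, rfl⟩ := exists_ofReal_eq_of_mem_spectrum_of_nonneg hA0 hx
    exact norm_ofReal_mul_inv_sub_le hz hκ ht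
  · rw [← Real.sqrt_sq (norm_nonneg _),
      norm_mul_sq_eq_norm_star_mul_mul_self_mul hsqrt.isSelfAdjoint, hsqrt2, hR,
      star_cfc_mul_mul_cfc _ _ hcont]
    refine Real.sqrt_le_sqrt (norm_cfc_le (by positivity) fun x hx ↦ ?_)
    obtain ⟨t, ht, rfl⟩ := exists_ofReal_eq_of_mem_spectrum_of_nonneg hA0 hx
    exact norm_star_inv_sub_mul_ofReal_mul_inv_sub_le hz hκ ht

/-- For a nonnegative bounded self-adjoint operator `A` on a complex Hilbert space and
`z` on the contour `Re z = -κ + γ|Im z|` (κ, γ > 0), the operator `z•1 - A` is boundedly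
invertible, with `‖A (z - A)⁻¹‖ ≤ √(1+γ²)` and `‖A^{1/2} (z - A)⁻¹‖ ≤ √((1+γ²)/κ)`.
Here `sqrtA` is the positive square root of `A`, characterized by `sqrtA.IsPositive`
and `sqrtA * sqrtA = A`. -/
theorem operator_resolvent_estimates_on_contour
    {H : Type*} [NormedAddCommGroup H] [InnerProductSpace ℂ H] [CompleteSpace H]
    (A sqrtA : H →L[ℂ] H) (hA : A.IsPositive)
    (hsqrt : sqrtA.IsPositive) (hsqrt2 : sqrtA * sqrtA = A)
    (κ γ : ℝ) (hκ : 0 < κ) (hγ : 0 < γ)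
    (z : ℂ) (hz : z.re = -κ + γ * |z.im|) :
    IsUnit (z • (1 : H →L[ℂ] H) - A) ∧
    ‖A * Ring.inverse (z • (1 : H →L[ℂ] H) - A)‖ ≤ Real.sqrt (1 + γ ^ 2) ∧
    ‖sqrtA * Ring.inverse (z • (1 : H →L[ℂ] H) - A)‖ ≤ Real.sqrt ((1 + γ ^ 2) / κ) :=
  operator_resolvent_estimates_on_contour_general A sqrtA hA hsqrt hsqrt2 κ γ hκ z hz
end

section
/- Let H be a complex Hilbert space, A a bounded self-adjoint operator on H with A ≥ ε·I for some ε > 0, and C a bounded operator on H. Set B = A^{1/2} C A^{1/2}. Let κ > 0 and γ > 0 be such that ‖C‖·√(1+γ²) < 1. Then for every z ∈ ℂ with Re z = −κ + γ·|Im z|, the operator z·I − A − B is boundedly invertible, the series ∑_{n=0}^∞ (C A (z·I − A)⁻¹)ⁿ converges absolutely in operator norm, and (z·I − A − B)⁻¹ = A^{1/2} (z·I − A)⁻¹ [∑_{n=0}^∞ (C A (z·I − A)⁻¹)ⁿ] A^{−1/2}. -/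
/-!
Since `sqrtA` commutes with `A`, the perturbation factors as
`z - A - sqrtA C sqrtA = sqrtA (1 - C A (z - A)⁻¹) (z - A) sqrtA⁻¹`, so everything reduces to the
invertibility of the middle factor by a Neumann series. That needs `‖A (z - A)⁻¹‖ ≤ √(1 + γ²)`,
which by the functional calculus is the scalar bound `λ ≤ λ + κ ≤ √(1 + γ²) |z - λ|` for
`λ ∈ σ(A) ⊆ [ε, ∞)`, the second inequality being Cauchy–Schwarz on the contour.
-/

open scoped ComplexOrder

theorem sub_mul_mul_eq_mul_one_sub_mul_mul {R : Type*} [Ring R] {s a u : R} (c : R)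
    (hs : IsUnit s) (hsa : s * s = a) (hu : IsUnit u) (hsu : Commute s u) :
    u - s * c * s = s * (1 - c * (a * Ring.inverse u)) * u * Ring.inverse s := by
  symm
  calc s * (1 - c * (a * Ring.inverse u)) * u * Ring.inverse s
      = s * u * Ring.inverse s - s * c * s * (s * (Ring.inverse u * u) * Ring.inverse s) := by
        rw [← hsa]; noncomm_ring
    _ = u * (s * Ring.inverse s) - s * c * s * (s * Ring.inverse s) := by
        rw [Ring.inverse_mul_cancel u hu, mul_one, hsu.eq, mul_assoc]
    _ = u - s * c * s := by rw [Ring.mul_inverse_cancel s hs, mul_one, mul_one]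

theorem abs_add_le_sqrt_one_add_sq_mul_norm_sub {κ γ : ℝ} {z : ℂ}
    (hz : z.re = -κ + γ * |z.im|) (t : ℝ) :
    |t + κ| ≤ √(1 + γ ^ 2) * ‖z - t‖ := by
  have hnorm : ‖z - t‖ ^ 2 = (z.re - t) ^ 2 + |z.im| ^ 2 := by
    rw [Complex.sq_norm, Complex.normSq_apply, sq_abs]
    simp only [Complex.sub_re, Complex.sub_im, Complex.ofReal_re, Complex.ofReal_im, sub_zero]
    ring
  have htκ : t + κ = γ * |z.im| - (z.re - t) := by linarith
  rw [← Real.sqrt_sq (norm_nonneg _), ← Real.sqrt_mul (by positivity)]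
  apply Real.abs_le_sqrt
  -- Cauchy–Schwarz for the vectors `(-1, γ)` and `(z.re - t, |z.im|)`
  rw [hnorm, htκ]
  nlinarith [sq_nonneg (|z.im| + γ * (z.re - t))]

theorem le_re_of_mem_spectrum {𝒜 : Type*} [CStarAlgebra 𝒜] [PartialOrder 𝒜] [StarOrderedRing 𝒜]
    {a : 𝒜} {ε : ℝ} (ha : 0 ≤ a - (ε : ℂ) • 1) {μ : ℂ} (hμ : μ ∈ spectrum ℂ a) : ε ≤ μ.re := by
  have hmem : μ - ε ∈ spectrum ℂ (a - (ε : ℂ) • 1) := by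
    rw [← Algebra.algebraMap_eq_smul_one, ← spectrum.sub_singleton_eq]
    exact Set.sub_mem_sub hμ rfl
  have := (Complex.le_def.mp (spectrum_nonneg_of_nonneg ha hmem)).1
  simp only [Complex.zero_re, Complex.sub_re, Complex.ofReal_re] at this
  linarith

theorem norm_mul_ringInverse_sub_le {𝒜 : Type*} [CStarAlgebra 𝒜] {a : 𝒜} [IsStarNormal a]
    {z : ℂ} {c : ℝ} (hc : 0 ≤ c) (hz : z ∉ spectrum ℂ a)
    (h : ∀ μ ∈ spectrum ℂ a, ‖μ‖ ≤ c * ‖z - μ‖) :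
    ‖a * Ring.inverse (z • 1 - a)‖ ≤ c := by
  have hne : ∀ μ ∈ spectrum ℂ a, z - μ ≠ 0 := fun μ hμ h0 => hz (sub_eq_zero.mp h0 ▸ hμ)
  have hres : cfc (fun μ => (z - μ)⁻¹) a = Ring.inverse (z • 1 - a) := by
    rw [cfc_inv (fun μ => z - μ) a hne, cfc_sub _ _ a, cfc_const z a, cfc_id' ℂ a,
      Algebra.algebraMap_eq_smul_one]
  have hcont : ContinuousOn (fun μ => (z - μ)⁻¹) (spectrum ℂ a) :=
    (continuousOn_const.sub continuousOn_id).inv₀ hne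
  have hmul : a * cfc (fun μ => (z - μ)⁻¹) a = cfc (fun μ => μ * (z - μ)⁻¹) a := by
    rw [cfc_mul (fun μ => μ) _ a continuousOn_id hcont, cfc_id' ℂ a]
  rw [← hres, hmul]
  refine norm_cfc_le hc fun μ hμ => ?_
  rw [norm_mul, norm_inv, ← div_eq_mul_inv, div_le_iff₀ (norm_pos_iff.mpr (hne μ hμ))]
  exact h μ hμ

open ContinuousLinearMap

theorem resolvent_neumann_series_form_bounded_general
    {H : Type*} [NormedAddCommGroup H] [InnerProductSpace ℂ H] [CompleteSpace H]
    (ε : ℝ) (hε : 0 < ε)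
    (A C sqrtA : H →L[ℂ] H) (hA : IsSelfAdjoint A)
    (hAε : (A - (ε : ℂ) • (1 : H →L[ℂ] H)).IsPositive)
    (hsqrt2 : sqrtA * sqrtA = A)
    (κ γ : ℝ) (hκ : 0 < κ)
    (hC : ‖C‖ * Real.sqrt (1 + γ ^ 2) < 1)
    (z : ℂ) (hz : z.re = -κ + γ * |z.im|) :
    IsUnit (z • (1 : H →L[ℂ] H) - A - sqrtA * C * sqrtA) ∧
    Summable (fun n : ℕ =>
      ‖(C * (A * Ring.inverse (z • (1 : H →L[ℂ] H) - A))) ^ n‖) ∧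
    Ring.inverse (z • (1 : H →L[ℂ] H) - A - sqrtA * C * sqrtA) =
      sqrtA * Ring.inverse (z • (1 : H →L[ℂ] H) - A) *
        (∑' n : ℕ, (C * (A * Ring.inverse (z • (1 : H →L[ℂ] H) - A))) ^ n) *
        Ring.inverse sqrtA := by
  have hspec : ∀ μ ∈ spectrum ℂ A, μ = μ.re ∧ ε ≤ μ.re := fun μ hμ =>
    ⟨Complex.ext rfl (by simpa using hA.im_eq_zero_of_mem_spectrum hμ),
      le_re_of_mem_spectrum ((nonneg_iff_isPositive _).mpr hAε) hμ⟩
  have hzA : z ∉ spectrum ℂ A := fun hmem => by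
    obtain ⟨hz_eq, hεz⟩ := hspec z hmem
    have him : z.im = 0 := by rw [hz_eq, Complex.ofReal_im]
    rw [hz, him, abs_zero, mul_zero] at hεz
    linarith
  have hu : IsUnit (z • 1 - A) := by
    simpa only [Algebra.algebraMap_eq_smul_one] using spectrum.notMem_iff.mp hzA
  have hres : ‖A * Ring.inverse (z • 1 - A)‖ ≤ √(1 + γ ^ 2) := by
    have := hA.isStarNormal
    refine norm_mul_ringInverse_sub_le (Real.sqrt_nonneg _) hzA fun μ hμ => ?_
    obtain ⟨hμ_eq, hεμ⟩ := hspec μ hμ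
    rw [hμ_eq, Complex.norm_real, Real.norm_eq_abs]
    calc |μ.re| ≤ |μ.re + κ| := by
          rw [abs_of_pos (by linarith), abs_of_pos (by linarith)]; linarith
      _ ≤ _ := abs_add_le_sqrt_one_add_sq_mul_norm_sub hz μ.re
  have hX : ‖C * (A * Ring.inverse (z • 1 - A))‖ < 1 :=
    (norm_mul_le _ _).trans_lt ((mul_le_mul_of_nonneg_left hres (norm_nonneg C)).trans_lt hC)
  have hsA : IsUnit sqrtA := by
    rw [← isUnit_pow_iff two_ne_zero, sq, hsqrt2]
    exact (spectrum.zero_notMem_iff ℂ).mp fun h0 => by linarith [(hspec 0 h0).2, Complex.zero_re]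
  have hcomm : Commute sqrtA (z • 1 - A) := by
    rw [← hsqrt2]
    exact ((Commute.one_right _).smul_right z).sub_right
      ((Commute.refl _).mul_right (Commute.refl _))
  have h1X := isUnit_one_sub_of_norm_lt_one hX
  rw [sub_mul_mul_eq_mul_one_sub_mul_mul C hsA hsqrt2 hu hcomm]
  refine ⟨((hsA.mul h1X).mul hu).mul hsA.ringInverse,
    summable_norm_geometric_of_norm_lt_one hX, ?_⟩
  rw [Ring.inverse_mul (.inr hsA.ringInverse), Ring.inverse_mul (.inr hu),
    Ring.inverse_mul (.inl hsA), Ring.inverse_inverse hsA, geom_series_eq_inverse _ hX]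
  simp only [mul_assoc]

/-- Neumann series for the resolvent of `A + B`, `B = A^{1/2} C A^{1/2}`, on the contour
`Re z = -κ + γ|Im z|`, provided `‖C‖·√(1+γ²) < 1` and `A ≥ ε·1` for some `ε > 0`:
`z•1 - A - B` is boundedly invertible, the series `∑ (C A (z-A)⁻¹)ⁿ` converges absolutely
in operator norm, and `(z - A - B)⁻¹ = A^{1/2}(z-A)⁻¹ [∑ₙ (C A (z-A)⁻¹)ⁿ] A^{-1/2}`.
Here `sqrtA` is the positive square root of `A`. -/
theorem resolvent_neumann_series_form_bounded
    {H : Type*} [NormedAddCommGroup H] [InnerProductSpace ℂ H] [CompleteSpace H]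
    (ε : ℝ) (hε : 0 < ε)
    (A C sqrtA : H →L[ℂ] H) (hA : IsSelfAdjoint A)
    (hAε : (A - (ε : ℂ) • (1 : H →L[ℂ] H)).IsPositive)
    (hsqrt : sqrtA.IsPositive) (hsqrt2 : sqrtA * sqrtA = A)
    (κ γ : ℝ) (hκ : 0 < κ) (hγ : 0 < γ)
    (hC : ‖C‖ * Real.sqrt (1 + γ ^ 2) < 1)
    (z : ℂ) (hz : z.re = -κ + γ * |z.im|) :
    IsUnit (z • (1 : H →L[ℂ] H) - A - sqrtA * C * sqrtA) ∧
    Summable (fun n : ℕ =>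
      ‖(C * (A * Ring.inverse (z • (1 : H →L[ℂ] H) - A))) ^ n‖) ∧
    Ring.inverse (z • (1 : H →L[ℂ] H) - A - sqrtA * C * sqrtA) =
      sqrtA * Ring.inverse (z • (1 : H →L[ℂ] H) - A) *
        (∑' n : ℕ, (C * (A * Ring.inverse (z • (1 : H →L[ℂ] H) - A))) ^ n) *
        Ring.inverse sqrtA :=
  resolvent_neumann_series_form_bounded_general ε hε A C sqrtA hA hAε hsqrt2 κ γ hκ hC z hz
end

section
/- Let n ≥ 1 and let π ∈ 𝒲_{2n} be a Wick pairing. Then for every 0 ≤ ℓ ≤ 2n, the cardinality of M^π_ℓ equals −∑_{j=1}^ℓ (−1)^{π⁻¹(j)}. Consequently, for 1 ≤ ℓ ≤ 2n−1, one has ∑_{j=1}^ℓ (−1)^{π⁻¹(j)} = 0 if and only if every pair {π(2i−1), π(2i)}, 1 ≤ i ≤ n, is contained entirely in {1,…,ℓ} or entirely in {ℓ+1,…,2n}. -/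
/-- The element of `Fin (2n)` at (0-based) position `2i`; it corresponds to the paper's
(1-based) position `2i-1`. -/
def wp1 {n : ℕ} (i : Fin n) : Fin (2 * n) := ⟨2 * i.val, by have := i.isLt; omega⟩

/-- The element of `Fin (2n)` at (0-based) position `2i+1`; it corresponds to the paper's
(1-based) position `2i`. -/
def wp2 {n : ℕ} (i : Fin n) : Fin (2 * n) := ⟨2 * i.val + 1, by have := i.isLt; omega⟩

/-- A permutation `π` of `{1,…,2n}` (realized as `Fin (2n)`, 0-based) is a Wick pairing if
`π(2i-1) < π(2i)` for `1 ≤ i ≤ n` and `π(2j-1) < π(2j+1)` for `1 ≤ j ≤ n-1` (1-based). -/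
def IsWickPairing (n : ℕ) (π : Equiv.Perm (Fin (2 * n))) : Prop :=
  (∀ i : Fin n, π (wp1 i) < π (wp2 i)) ∧
  (∀ i : ℕ, ∀ h : i + 1 < n, π (wp1 ⟨i, by omega⟩) < π (wp1 ⟨i + 1, h⟩))

/-- For a Wick pairing `π ∈ 𝒲_{2n}` and `0 ≤ j ≤ 2n`, the set
`M^π_j = {i : π(2i-1) ≤ j < π(2i)}` (1-based values) of pairs whose connecting line
crosses `j`. -/
def wickM (n : ℕ) (π : Equiv.Perm (Fin (2 * n))) (j : ℕ) : Finset (Fin n) :=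
  Finset.univ.filter fun i => (π (wp1 i) : ℕ) < j ∧ j ≤ (π (wp2 i) : ℕ)

private lemma sum_range_two_mul (f : ℕ → ℤ) (n : ℕ) :
    ∑ k ∈ Finset.range (2 * n), f k = ∑ i ∈ Finset.range n, (f (2 * i) + f (2 * i + 1)) := by
  induction n with
  | zero => simp
  | succ m ih =>
    have h2 : 2 * (m + 1) = (2 * m + 1) + 1 := by omega
    rw [h2, Finset.sum_range_succ, Finset.sum_range_succ, ih, Finset.sum_range_succ]
    ring

/-- For a Wick pairing `π ∈ 𝒲_{2n}`: (i) `|M^π_ℓ| = -∑_{j=1}^ℓ (-1)^{π⁻¹(j)}` for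
`0 ≤ ℓ ≤ 2n`; (ii) for `1 ≤ ℓ ≤ 2n-1`, the partial sum `∑_{j=1}^ℓ (-1)^{π⁻¹(j)}`
vanishes iff every pair `{π(2i-1), π(2i)}` lies entirely in `{1,…,ℓ}` or entirely in
`{ℓ+1,…,2n}` (1-based; here elements of `Fin (2n)` are 0-based, so membership in
`{1,…,ℓ}` reads `(·) < ℓ`). -/
theorem wickM_card_eq_neg_partial_sum (n : ℕ) (hn : 1 ≤ n)
    (π : Equiv.Perm (Fin (2 * n))) (hπ : IsWickPairing n π) :
    (∀ ℓ : ℕ, ℓ ≤ 2 * n →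
      ((wickM n π ℓ).card : ℤ) =
        -∑ j ∈ Finset.univ.filter (fun j : Fin (2 * n) => (j : ℕ) < ℓ),
          (-1 : ℤ) ^ ((π.symm j : ℕ) + 1)) ∧
    ∀ ℓ : ℕ, 1 ≤ ℓ → ℓ ≤ 2 * n - 1 →
      ((∑ j ∈ Finset.univ.filter (fun j : Fin (2 * n) => (j : ℕ) < ℓ),
          (-1 : ℤ) ^ ((π.symm j : ℕ) + 1)) = 0 ↔
        ∀ i : Fin n, ((π (wp1 i) : ℕ) < ℓ ∧ (π (wp2 i) : ℕ) < ℓ) ∨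
          (ℓ ≤ (π (wp1 i) : ℕ) ∧ ℓ ≤ (π (wp2 i) : ℕ))) := by

  have key : ∀ ℓ : ℕ,
      ((wickM n π ℓ).card : ℤ) =
        -∑ j ∈ Finset.univ.filter (fun j : Fin (2 * n) => (j : ℕ) < ℓ),
          (-1 : ℤ) ^ ((π.symm j : ℕ) + 1) := by
    intro ℓ
    set g : ℕ → ℤ := fun k =>
      if hk : k < 2 * n then (if ((π ⟨k, hk⟩ : Fin (2 * n)) : ℕ) < ℓ then (-1 : ℤ) ^ (k + 1) else 0)
      else 0 with hg
    have h1 : ∑ j ∈ Finset.univ.filter (fun j : Fin (2 * n) => (j : ℕ) < ℓ),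
        (-1 : ℤ) ^ ((π.symm j : ℕ) + 1)
        = ∑ p : Fin (2 * n), g (p : ℕ) := by
      rw [Finset.sum_filter]
      refine (Fintype.sum_equiv π _ _ fun p => ?_).symm
      simp [hg, p.isLt, Fin.eta]
    have h2 : ∑ p : Fin (2 * n), g (p : ℕ) = ∑ k ∈ Finset.range (2 * n), g k :=
      Fin.sum_univ_eq_sum_range g (2 * n)
    have h3 : ∑ k ∈ Finset.range (2 * n), g k
        = ∑ i ∈ Finset.range n, (g (2 * i) + g (2 * i + 1)) := sum_range_two_mul g n
    have h4 : ∑ i ∈ Finset.range n, (g (2 * i) + g (2 * i + 1))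
        = ∑ i : Fin n, (g (2 * (i : ℕ)) + g (2 * (i : ℕ) + 1)) :=
      (Fin.sum_univ_eq_sum_range (fun i => g (2 * i) + g (2 * i + 1)) n).symm
    have hcard : ((wickM n π ℓ).card : ℤ)
        = ∑ i : Fin n, (if ((π (wp1 i) : ℕ) < ℓ ∧ ℓ ≤ (π (wp2 i) : ℕ)) then (1 : ℤ) else 0) := by
      rw [wickM, Finset.card_filter]
      push_cast
      simp
    rw [h1, h2, h3, h4, hcard, ← Finset.sum_neg_distrib]
    refine Finset.sum_congr rfl fun i _ => ?_
    have hlt : ((π (wp1 i) : ℕ)) < ((π (wp2 i) : ℕ)) := hπ.1 i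
    have hb1 : (2 * (i : ℕ)) < 2 * n := by have := i.isLt; omega
    have hb2 : (2 * (i : ℕ) + 1) < 2 * n := by have := i.isLt; omega
    have e1 : g (2 * (i : ℕ)) = if ((π (wp1 i) : ℕ)) < ℓ then (-1 : ℤ) ^ (2 * (i : ℕ) + 1) else 0 := by
      rw [hg]; simp only [hb1, dif_pos]; rfl
    have e2 : g (2 * (i : ℕ) + 1) = if ((π (wp2 i) : ℕ)) < ℓ then (-1 : ℤ) ^ (2 * (i : ℕ) + 2) else 0 := by
      rw [hg]; simp only [hb2, dif_pos]; rfl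
    have p1 : (-1 : ℤ) ^ (2 * (i : ℕ) + 1) = -1 := by
      rw [pow_succ, pow_mul]; norm_num
    have p2 : (-1 : ℤ) ^ (2 * (i : ℕ) + 2) = 1 := by
      rw [pow_succ, pow_succ, pow_mul]; norm_num
    rw [e1, e2, p1, p2]
    split_ifs <;> omega
  constructor
  · exact fun ℓ _ => key ℓ
  · intro ℓ _ _
    have hk := key ℓ
    constructor
    · intro hsum i
      rw [hsum, neg_zero] at hk
      have hempty : wickM n π ℓ = ∅ := by
        have := Finset.card_eq_zero.mp (by exact_mod_cast hk)
        exact this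
      have : i ∉ wickM n π ℓ := by rw [hempty]; exact Finset.notMem_empty i
      rw [wickM, Finset.mem_filter] at this
      have hlt : ((π (wp1 i) : ℕ)) < ((π (wp2 i) : ℕ)) := hπ.1 i
      have hn2 : ¬ ((π (wp1 i) : ℕ) < ℓ ∧ ℓ ≤ (π (wp2 i) : ℕ)) :=
        fun hc => this ⟨Finset.mem_univ i, hc⟩
      omega
    · intro hall
      have hempty : wickM n π ℓ = ∅ := by
        rw [wickM, Finset.filter_eq_empty_iff]
        intro i _
        rcases hall i with h | h
        · omega
        · omega
      rw [hempty] at hk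
      simpa using hk.symm
end

section
/- Let d ≥ 1, n ≥ 1, ω : ℝ^d → [0,∞), P ∈ ℝ^d, a ≥ 0, κ > 0, γ > 0, and let π ∈ 𝒲_{2n} be a Wick pairing. Then for every z ∈ ℂ with Re z = −κ + γ·|Im z| and every k = (k₁,…,kₙ) ∈ (ℝ^d)^n, each factor z − a − E^{(π,j)}_P(k) (1 ≤ j ≤ 2n) is nonzero and ∏_{j=1}^{2n} |z − a − E^{(π,j)}_P(k)|⁻¹ ≤ ((1+γ²)/(κ+a))^n · ∏_{i=1}^n (κ + a + ω(k_i) + |k_i|²/2)⁻¹. -/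
/-- The energy `E^{(π,j)}_P(k) = |P - ∑_{ℓ ∈ M^π_j} k_ℓ|² + ∑_{ℓ ∈ M^π_j} ω(k_ℓ)`. -/
noncomputable def wickE (d n : ℕ) (ω : EuclideanSpace ℝ (Fin d) → ℝ)
    (P : EuclideanSpace ℝ (Fin d)) (π : Equiv.Perm (Fin (2 * n))) (j : ℕ)
    (k : Fin n → EuclideanSpace ℝ (Fin d)) : ℝ :=
  ‖P - ∑ ℓ ∈ wickM n π j, k ℓ‖ ^ 2 + ∑ ℓ ∈ wickM n π j, ω (k ℓ)

/-!
On the contour, Cauchy–Schwarz gives `κ + a + E ≤ √(1 + γ²) |z - a - E|` for every real `E`,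
so the left side is at most `(1 + γ²)ⁿ / ∏ⱼ (c + Eⱼ)` with `c = κ + a` and `Eⱼ ≥ 0` the energies.
Each pair `i` is opened at one step and closed at another, and at both the adjacent energies satisfy
`(c + Eⱼ)(c + Eⱼ₊₁) ≥ c (c + ω(kᵢ) + |kᵢ|²/2)`, because `|kᵢ|` is at most the sum of the total
momenta `|P - ∑ k|` before and after the step. Since `E₀ = E₂ₙ`, the square of `∏ⱼ (c + Eⱼ)` is the
product of `(c + Eⱼ)(c + Eⱼ₊₁)` over all `2n` steps, hence at least `(cⁿ ∏ᵢ (c + ω(kᵢ) + |kᵢ|²/2))²`.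
-/

open Finset

theorem Finset.prod_range_succ_eq_prod_Icc {M : Type*} [CommMonoid M] (f : ℕ → M) (m : ℕ) :
    ∏ v ∈ range m, f (v + 1) = ∏ j ∈ Icc 1 m, f j := by
  rw [← Ico_add_one_right_eq_Icc, prod_Ico_eq_prod_range, Nat.add_sub_cancel]
  simp only [Nat.add_comm 1]

theorem Finset.sq_prod_Icc_eq_prod_range_mul_succ {M : Type*} [CommMonoid M] (f : ℕ → M)
    (m : ℕ) (hf : f 0 = f m) :
    (∏ j ∈ Icc 1 m, f j) ^ 2 = ∏ v ∈ range m, f v * f (v + 1) := by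
  have hshift : ∏ v ∈ range m, f v = ∏ v ∈ range m, f (v + 1) := by
    cases m with
    | zero => rfl
    | succ m => rw [prod_range_succ', prod_range_succ, hf, mul_comm]
  rw [prod_mul_distrib, hshift, prod_range_succ_eq_prod_Icc, sq]

theorem Complex.mul_abs_im_sub_re_le_sqrt_mul_norm (w : ℂ) (γ : ℝ) :
    γ * |w.im| - w.re ≤ √(1 + γ ^ 2) * ‖w‖ := by
  have hCS : (γ * |w.im| - w.re) ^ 2 ≤ (1 + γ ^ 2) * ‖w‖ ^ 2 := by
    rw [Complex.sq_norm, Complex.normSq_apply]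
    nlinarith [sq_nonneg (γ * w.re + |w.im|), sq_abs w.im]
  calc γ * |w.im| - w.re ≤ |γ * |w.im| - w.re| := le_abs_self _
    _ ≤ √((1 + γ ^ 2) * ‖w‖ ^ 2) := Real.abs_le_sqrt hCS
    _ = √(1 + γ ^ 2) * ‖w‖ := by rw [Real.sqrt_mul (by positivity), Real.sqrt_sq (norm_nonneg _)]

section Energy

variable {ι E : Type*} [SeminormedAddCommGroup E]

def wickEnergy (ω : E → ℝ) (P : E) (k : ι → E) (M : Finset ι) : ℝ :=
  ‖P - ∑ ℓ ∈ M, k ℓ‖ ^ 2 + ∑ ℓ ∈ M, ω (k ℓ)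

theorem wickEnergy_nonneg {ω : E → ℝ} (hω : ∀ x, 0 ≤ ω x) (P : E) (k : ι → E) (M : Finset ι) :
    0 ≤ wickEnergy ω P k M :=
  add_nonneg (sq_nonneg _) (sum_nonneg fun _ _ => hω _)

theorem mul_le_wickEnergy_mul_wickEnergy_insert [DecidableEq ι] {ω : E → ℝ} (hω : ∀ x, 0 ≤ ω x)
    (P : E) (k : ι → E) {c : ℝ} (hc : 0 ≤ c) {M : Finset ι} {i : ι} (hi : i ∉ M) :
    c * (c + ω (k i) + ‖k i‖ ^ 2 / 2) ≤
      (c + wickEnergy ω P k M) * (c + wickEnergy ω P k (insert i M)) := by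
  rw [wickEnergy, wickEnergy, sum_insert hi, sum_insert hi]
  set A := ‖P - ∑ ℓ ∈ M, k ℓ‖
  set B := ‖P - (k i + ∑ ℓ ∈ M, k ℓ)‖
  have hW : 0 ≤ ∑ ℓ ∈ M, ω (k ℓ) := sum_nonneg fun _ _ => hω _
  have hki : ‖k i‖ ≤ A + B :=
    calc ‖k i‖ = ‖(P - ∑ ℓ ∈ M, k ℓ) - (P - (k i + ∑ ℓ ∈ M, k ℓ))‖ := by congr 1; abel
      _ ≤ A + B := norm_sub_le _ _
  have hki_sq : ‖k i‖ ^ 2 / 2 ≤ A ^ 2 + B ^ 2 := by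
    nlinarith [sq_nonneg (A - B), norm_nonneg (k i)]
  nlinarith [mul_nonneg hc hW, hω (k i), mul_nonneg (add_nonneg (sq_nonneg A) hW)
    (add_nonneg (sq_nonneg B) (add_nonneg (hω (k i)) hW))]

end Energy

theorem wickE_eq_wickEnergy (d n : ℕ) (ω : EuclideanSpace ℝ (Fin d) → ℝ)
    (P : EuclideanSpace ℝ (Fin d)) (π : Equiv.Perm (Fin (2 * n))) (j : ℕ)
    (k : Fin n → EuclideanSpace ℝ (Fin d)) :
    wickE d n ω P π j k = wickEnergy ω P k (wickM n π j) := rfl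

def wickSlotEquiv (n : ℕ) : Fin n × Fin 2 ≃ Fin (2 * n) :=
  finProdFinEquiv.trans (finCongr (Nat.mul_comm n 2))

section WickPairing

variable {n : ℕ}

theorem wickSlotEquiv_zero (i : Fin n) : wickSlotEquiv n (i, 0) = wp1 i := by
  ext; simp [wickSlotEquiv, wp1]

theorem wickSlotEquiv_one (i : Fin n) : wickSlotEquiv n (i, 1) = wp2 i := by
  ext; simp [wickSlotEquiv, wp2]; ring

theorem prod_fin_two_mul_eq_prod_wp1_mul_wp2 {M : Type*} [CommMonoid M] (f : Fin (2 * n) → M) :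
    ∏ m, f m = ∏ i, f (wp1 i) * f (wp2 i) := by
  rw [← (wickSlotEquiv n).prod_comp, Fintype.prod_prod_type]
  simp only [Fin.prod_univ_two, wickSlotEquiv_zero, wickSlotEquiv_one]

theorem wp1_injective : Function.Injective (wp1 (n := n)) := fun i j h =>
  Fin.ext (by have := congrArg Fin.val h; simp only [wp1] at this; omega)

theorem wp2_injective : Function.Injective (wp2 (n := n)) := fun i j h =>
  Fin.ext (by have := congrArg Fin.val h; simp only [wp2] at this; omega)

theorem wp1_ne_wp2 (i j : Fin n) : wp1 i ≠ wp2 j := fun h => by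
  have := congrArg Fin.val h; simp only [wp1, wp2] at this; omega

theorem mem_wickM {π : Equiv.Perm (Fin (2 * n))} {j : ℕ} {ℓ : Fin n} :
    ℓ ∈ wickM n π j ↔ (π (wp1 ℓ) : ℕ) < j ∧ j ≤ π (wp2 ℓ) := by
  simp [wickM]

theorem wickM_zero (π : Equiv.Perm (Fin (2 * n))) : wickM n π 0 = ∅ := by
  ext ℓ; simp [mem_wickM]

theorem wickM_two_mul (π : Equiv.Perm (Fin (2 * n))) : wickM n π (2 * n) = ∅ := by
  ext ℓ; simp [mem_wickM, (π (wp2 ℓ)).isLt]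

theorem wickM_succ_wp1 {π : Equiv.Perm (Fin (2 * n))} (hπ : ∀ i, π (wp1 i) < π (wp2 i))
    (i : Fin n) : wickM n π (π (wp1 i) + 1) = insert i (wickM n π (π (wp1 i))) := by
  ext ℓ
  rw [mem_insert, mem_wickM, mem_wickM]
  rcases eq_or_ne ℓ i with rfl | hne
  · have := hπ ℓ; simp only [true_or, iff_true]; omega
  · have h1 : (π (wp1 ℓ) : ℕ) ≠ π (wp1 i) :=
      Fin.val_injective.ne (π.injective.ne (wp1_injective.ne hne))
    have h2 : (π (wp2 ℓ) : ℕ) ≠ π (wp1 i) :=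
      Fin.val_injective.ne (π.injective.ne (wp1_ne_wp2 i ℓ).symm)
    simp only [hne, false_or]; omega

theorem wickM_wp2 {π : Equiv.Perm (Fin (2 * n))} (hπ : ∀ i, π (wp1 i) < π (wp2 i))
    (i : Fin n) : wickM n π (π (wp2 i)) = insert i (wickM n π (π (wp2 i) + 1)) := by
  ext ℓ
  rw [mem_insert, mem_wickM, mem_wickM]
  rcases eq_or_ne ℓ i with rfl | hne
  · have := hπ ℓ; simp only [true_or, iff_true]; omega
  · have h1 : (π (wp1 ℓ) : ℕ) ≠ π (wp2 i) :=
      Fin.val_injective.ne (π.injective.ne (wp1_ne_wp2 ℓ i))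
    have h2 : (π (wp2 ℓ) : ℕ) ≠ π (wp2 i) :=
      Fin.val_injective.ne (π.injective.ne (wp2_injective.ne hne))
    simp only [hne, false_or]; omega

end WickPairing

theorem pow_mul_prod_le_prod_wickE {d n : ℕ} {ω : EuclideanSpace ℝ (Fin d) → ℝ}
    (hω : ∀ x, 0 ≤ ω x) (P : EuclideanSpace ℝ (Fin d)) (k : Fin n → EuclideanSpace ℝ (Fin d))
    {c : ℝ} (hc : 0 ≤ c) {π : Equiv.Perm (Fin (2 * n))} (hπ : ∀ i, π (wp1 i) < π (wp2 i)) :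
    c ^ n * ∏ i, (c + ω (k i) + ‖k i‖ ^ 2 / 2) ≤ ∏ j ∈ Icc 1 (2 * n), (c + wickE d n ω P π j k) := by
  set f : ℕ → ℝ := fun j => c + wickE d n ω P π j k with hf
  have hf_nonneg : ∀ j, 0 ≤ f j := fun j => add_nonneg hc (wickEnergy_nonneg hω P k _)
  have hopen : ∀ i, c * (c + ω (k i) + ‖k i‖ ^ 2 / 2) ≤ f (π (wp1 i)) * f (π (wp1 i) + 1) :=
    fun i => by
      have h := mul_le_wickEnergy_mul_wickEnergy_insert hω P k hc
        (M := wickM n π (π (wp1 i))) (i := i) (by simp [mem_wickM])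
      rwa [← wickM_succ_wp1 hπ i] at h
  have hclose : ∀ i, c * (c + ω (k i) + ‖k i‖ ^ 2 / 2) ≤ f (π (wp2 i)) * f (π (wp2 i) + 1) :=
    fun i => by
      have h := mul_le_wickEnergy_mul_wickEnergy_insert hω P k hc
        (M := wickM n π (π (wp2 i) + 1)) (i := i) (by simp [mem_wickM])
      rw [← wickM_wp2 hπ i] at h
      exact h.trans_eq (mul_comm _ _)
  have hends : f 0 = f (2 * n) := by simp only [hf, wickE, wickM_zero, wickM_two_mul]
  have hsq : (∏ j ∈ Icc 1 (2 * n), f j) ^ 2 =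
      ∏ i, f (π (wp1 i)) * f (π (wp1 i) + 1) * (f (π (wp2 i)) * f (π (wp2 i) + 1)) := by
    rw [sq_prod_Icc_eq_prod_range_mul_succ f _ hends,
      ← Fin.prod_univ_eq_prod_range (fun v => f v * f (v + 1)), ← Equiv.prod_comp π,
      prod_fin_two_mul_eq_prod_wp1_mul_wp2]
  have hG : ∀ i, 0 ≤ c + ω (k i) + ‖k i‖ ^ 2 / 2 := fun i => by
    have := hω (k i); positivity
  have hcG : ∀ i, 0 ≤ c * (c + ω (k i) + ‖k i‖ ^ 2 / 2) := fun i => mul_nonneg hc (hG i)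
  refine (pow_le_pow_iff_left₀ (mul_nonneg (pow_nonneg hc n) (prod_nonneg fun i _ => hG i))
    (prod_nonneg fun j _ => hf_nonneg j) two_ne_zero).mp ?_
  calc (c ^ n * ∏ i, (c + ω (k i) + ‖k i‖ ^ 2 / 2)) ^ 2
      = ∏ i, c * (c + ω (k i) + ‖k i‖ ^ 2 / 2) * (c * (c + ω (k i) + ‖k i‖ ^ 2 / 2)) := by
        rw [prod_mul_distrib, prod_mul_distrib, prod_const, card_univ, Fintype.card_fin]; ring
    _ ≤ _ := hsq ▸ prod_le_prod (fun i _ => mul_nonneg (hcG i) (hcG i))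
        fun i _ => mul_le_mul (hopen i) (hclose i) (hcG i)
          (mul_nonneg (hf_nonneg _) (hf_nonneg _))

theorem wick_resolvent_product_bound_general (d n : ℕ)
    (ω : EuclideanSpace ℝ (Fin d) → ℝ) (hω : ∀ k, 0 ≤ ω k)
    (P : EuclideanSpace ℝ (Fin d)) (a : ℝ) (ha : 0 ≤ a)
    (κ γ : ℝ) (hκ : 0 < κ)
    (π : Equiv.Perm (Fin (2 * n))) (hπ : IsWickPairing n π)
    (z : ℂ) (hz : z.re = -κ + γ * |z.im|)
    (k : Fin n → EuclideanSpace ℝ (Fin d)) :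
    (∀ j ∈ Finset.Icc 1 (2 * n), z - (a : ℂ) - (wickE d n ω P π j k : ℂ) ≠ 0) ∧
    ∏ j ∈ Finset.Icc 1 (2 * n), ‖z - (a : ℂ) - (wickE d n ω P π j k : ℂ)‖⁻¹ ≤
      ((1 + γ ^ 2) / (κ + a)) ^ n * ∏ i : Fin n, (κ + a + ω (k i) + ‖k i‖ ^ 2 / 2)⁻¹ := by
  set E : ℕ → ℝ := fun j => wickE d n ω P π j k
  set w : ℕ → ℂ := fun j => z - a - E j
  have hcE : ∀ j, 0 < κ + a + E j := fun j => by
    have := wickEnergy_nonneg hω P k (wickM n π j); simp only [E, wickE_eq_wickEnergy]; linarith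
  have hfactor : ∀ j, κ + a + E j ≤ √(1 + γ ^ 2) * ‖w j‖ := fun j => by
    have h := Complex.mul_abs_im_sub_re_le_sqrt_mul_norm (w j) γ
    simp only [w, Complex.sub_im, Complex.sub_re, Complex.ofReal_im, Complex.ofReal_re, hz,
      sub_zero] at h
    linarith
  have hw : ∀ j, 0 < ‖w j‖ := fun j =>
    pos_of_mul_pos_right ((hcE j).trans_le (hfactor j)) (Real.sqrt_nonneg _)
  refine ⟨fun j _ => norm_pos_iff.mp (hw j), ?_⟩
  have hupper :
      ∏ j ∈ Icc 1 (2 * n), (κ + a + E j) ≤ (1 + γ ^ 2) ^ n * ∏ j ∈ Icc 1 (2 * n), ‖w j‖ :=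
    calc ∏ j ∈ Icc 1 (2 * n), (κ + a + E j)
        ≤ ∏ j ∈ Icc 1 (2 * n), √(1 + γ ^ 2) * ‖w j‖ :=
          prod_le_prod (fun j _ => (hcE j).le) fun j _ => hfactor j
      _ = (1 + γ ^ 2) ^ n * ∏ j ∈ Icc 1 (2 * n), ‖w j‖ := by
          rw [prod_mul_distrib, prod_const, Nat.card_Icc, Nat.add_sub_cancel, pow_mul,
            Real.sq_sqrt (by positivity)]
  have hlower := pow_mul_prod_le_prod_wickE hω P k (add_pos_of_pos_of_nonneg hκ ha).le hπ.1
  have hG : 0 < ∏ i : Fin n, (κ + a + ω (k i) + ‖k i‖ ^ 2 / 2) :=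
    prod_pos fun i _ => by have := hω (k i); positivity
  have hK : 0 < (1 + γ ^ 2) ^ n := by positivity
  calc ∏ j ∈ Icc 1 (2 * n), ‖w j‖⁻¹
      ≤ (1 + γ ^ 2) ^ n / ((κ + a) ^ n * ∏ i : Fin n, (κ + a + ω (k i) + ‖k i‖ ^ 2 / 2)) := by
        rw [prod_inv_distrib, inv_le_comm₀ (prod_pos fun j _ => hw j) (by positivity), inv_div,
          div_le_iff₀ hK, mul_comm _ ((1 + γ ^ 2) ^ n)]
        exact hlower.trans hupper
    _ = _ := by rw [div_pow, prod_inv_distrib]; ring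

/-- For `z` on the contour `Re z = -κ + γ|Im z|`, each factor `z - a - E^{(π,j)}_P(k)` is
nonzero and `∏_{j=1}^{2n} |z - a - E^{(π,j)}_P(k)|⁻¹
  ≤ ((1+γ²)/(κ+a))ⁿ ∏_{i=1}^n (κ + a + ω(k_i) + |k_i|²/2)⁻¹`. -/
theorem wick_resolvent_product_bound (d n : ℕ) (hd : 1 ≤ d) (hn : 1 ≤ n)
    (ω : EuclideanSpace ℝ (Fin d) → ℝ) (hω : ∀ k, 0 ≤ ω k)
    (P : EuclideanSpace ℝ (Fin d)) (a : ℝ) (ha : 0 ≤ a)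
    (κ γ : ℝ) (hκ : 0 < κ) (hγ : 0 < γ)
    (π : Equiv.Perm (Fin (2 * n))) (hπ : IsWickPairing n π)
    (z : ℂ) (hz : z.re = -κ + γ * |z.im|)
    (k : Fin n → EuclideanSpace ℝ (Fin d)) :
    (∀ j ∈ Finset.Icc 1 (2 * n), z - (a : ℂ) - (wickE d n ω P π j k : ℂ) ≠ 0) ∧
    ∏ j ∈ Finset.Icc 1 (2 * n), ‖z - (a : ℂ) - (wickE d n ω P π j k : ℂ)‖⁻¹ ≤
      ((1 + γ ^ 2) / (κ + a)) ^ n * ∏ i : Fin n, (κ + a + ω (k i) + ‖k i‖ ^ 2 / 2)⁻¹ :=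
  wick_resolvent_product_bound_general d n ω hω P a ha κ γ hκ π hπ z hz k
end

section
/- Let d ≥ 1, 0 ≤ β < d/2, and r > 0. Then for every P ∈ ℝ^d the integral ∫_{ℝ^d} e^{−r|P−k|²} |k|^{−2β} dk is finite, and there exists a finite positive Borel measure μ on [0,∞) such that for all P ∈ ℝ^d: ∫_{ℝ^d} e^{−r|P−k|²} |k|^{−2β} dk = ∫_{[0,∞)} e^{−λ|P|²} dμ(λ). In particular, the function |P|² ↦ ∫_{ℝ^d} e^{−r|P−k|²} |k|^{−2β} dk is completely monotone. -/
/-!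
For `β > 0`, the subordination identity `Γ(β) |k|^{-2β} = ∫₀^∞ x^{β-1} e^{-x|k|²} dx` and Fubini
turn the integral into `Γ(β)⁻¹ ∫₀^∞ x^{β-1} ∫ e^{-r|P-k|²} e^{-x|k|²} dk dx`, and the inner
convolution of two Gaussians is `(π/(r+x))^{d/2} e^{-(rx/(r+x))|P|²}`. So the integral is the
Laplace transform in `|P|²` of the image of `Γ(β)⁻¹ x^{β-1} (π/(r+x))^{d/2} dx` under
`x ↦ rx/(r+x) ∈ [0, r)`, a finite measure exactly because `β < d/2`. For `β = 0` the integral is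
the constant `(π/r)^{d/2}`, the transform of a point mass at `0`. Finally, the Laplace transform of
a finite measure on `[0, r]` may be differentiated under the integral sign, and
`(-1)^m (d/dt)^m ∫ e^{-lt} dμ(l) = ∫ l^m e^{-lt} dμ(l) ≥ 0`.
-/

open MeasureTheory Module Real Set Filter

section Laplace

variable {μ : Measure ℝ} {R : ℝ}

lemma norm_neg_pow_mul_exp_neg_mul_le {m : ℕ} {l t C : ℝ} (hl : l ∈ Icc 0 R) (ht : |t| ≤ C) :
    ‖(-l) ^ m * rexp (-l * t)‖ ≤ R ^ m * rexp (R * C) := by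
  have hR : 0 ≤ R := hl.1.trans hl.2
  rw [norm_mul, norm_pow, norm_neg, Real.norm_of_nonneg hl.1, Real.norm_of_nonneg (exp_pos _).le]
  refine mul_le_mul (pow_le_pow_left₀ hl.1 hl.2 m) (exp_le_exp.2 ?_) (exp_pos _).le
    (pow_nonneg hR m)
  calc -l * t ≤ l * |t| := by nlinarith [neg_abs_le t, hl.1]
    _ ≤ R * C := mul_le_mul hl.2 ht (abs_nonneg t) hR

variable [IsFiniteMeasure μ]

lemma integrable_neg_pow_mul_exp_neg_mul (hμ : ∀ᵐ l ∂μ, l ∈ Icc 0 R) (m : ℕ) (t : ℝ) :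
    Integrable (fun l => (-l) ^ m * rexp (-l * t)) μ :=
  (integrable_const (R ^ m * rexp (R * |t|))).mono' (by fun_prop)
    (hμ.mono fun _ hl => norm_neg_pow_mul_exp_neg_mul_le hl le_rfl)

lemma hasDerivAt_integral_neg_pow_mul_exp_neg_mul (hμ : ∀ᵐ l ∂μ, l ∈ Icc 0 R) (m : ℕ)
    (t₀ : ℝ) :
    HasDerivAt (fun t => ∫ l, (-l) ^ m * rexp (-l * t) ∂μ)
      (∫ l, (-l) ^ (m + 1) * rexp (-l * t₀) ∂μ) t₀ := by
  refine (hasDerivAt_integral_of_dominated_loc_of_deriv_le (Metric.ball_mem_nhds t₀ one_pos)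
    (F := fun t l => (-l) ^ m * rexp (-l * t))
    (F' := fun t l => (-l) ^ (m + 1) * rexp (-l * t))
    (bound := fun _ => R ^ (m + 1) * rexp (R * (|t₀| + 1)))
    (Eventually.of_forall fun t => by fun_prop)
    (integrable_neg_pow_mul_exp_neg_mul hμ m t₀) (by fun_prop) ?_ (integrable_const _) ?_).2
  · filter_upwards [hμ] with l hl t ht
    refine norm_neg_pow_mul_exp_neg_mul_le hl ?_
    have := abs_sub_abs_le_abs_sub t t₀
    rw [Metric.mem_ball, Real.dist_eq] at ht
    linarith
  · exact Eventually.of_forall fun l t _ =>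
      ((((hasDerivAt_id t).const_mul (-l)).exp).const_mul ((-l) ^ m)).congr_deriv
        (by simp only [id, mul_one]; ring)

lemma iteratedDeriv_integral_exp_neg_mul (hμ : ∀ᵐ l ∂μ, l ∈ Icc 0 R) (m : ℕ) :
    iteratedDeriv m (fun t => ∫ l, rexp (-l * t) ∂μ) =
      fun t => ∫ l, (-l) ^ m * rexp (-l * t) ∂μ := by
  induction m with
  | zero => simp
  | succ m ih =>
    rw [iteratedDeriv_succ, ih]
    exact funext fun t => (hasDerivAt_integral_neg_pow_mul_exp_neg_mul hμ m t).deriv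

theorem neg_one_pow_mul_iteratedDeriv_integral_exp_neg_mul_nonneg
    (hμ : ∀ᵐ l ∂μ, l ∈ Icc 0 R) (m : ℕ) (t : ℝ) :
    0 ≤ (-1) ^ m * iteratedDeriv m (fun t => ∫ l, rexp (-l * t) ∂μ) t := by
  rw [iteratedDeriv_integral_exp_neg_mul hμ, ← integral_const_mul]
  refine integral_nonneg_of_ae (hμ.mono fun l hl => ?_)
  simp only [Pi.zero_apply]
  rw [← mul_assoc, ← mul_pow, neg_one_mul, neg_neg]
  exact mul_nonneg (pow_nonneg hl.1 m) (exp_pos _).le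

end Laplace

section Gaussian

variable {V : Type*} [NormedAddCommGroup V] [InnerProductSpace ℝ V]

lemma mul_norm_sub_sq_add_mul_norm_sq {r x : ℝ} (h : r + x ≠ 0) (P k : V) :
    r * ‖P - k‖ ^ 2 + x * ‖k‖ ^ 2 =
      r * x / (r + x) * ‖P‖ ^ 2 + (r + x) * ‖k - (r / (r + x)) • P‖ ^ 2 := by
  rw [norm_sub_sq_real, norm_sub_sq_real, real_inner_smul_right, norm_smul, real_inner_comm,
    Real.norm_eq_abs, mul_pow, sq_abs]
  field_simp
  ring

lemma exp_neg_mul_norm_sub_sq_mul_exp_neg_mul_norm_sq {r x : ℝ} (h : r + x ≠ 0) (P k : V) :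
    rexp (-r * ‖P - k‖ ^ 2) * rexp (-x * ‖k‖ ^ 2) =
      rexp (-(r * x / (r + x)) * ‖P‖ ^ 2) * rexp (-(r + x) * ‖k - (r / (r + x)) • P‖ ^ 2) := by
  rw [← exp_add, ← exp_add, neg_mul, neg_mul, neg_mul, neg_mul, ← neg_add, ← neg_add,
    mul_norm_sub_sq_add_mul_norm_sq h]

variable [FiniteDimensional ℝ V] [MeasurableSpace V] [BorelSpace V]

lemma integrable_exp_neg_mul_norm_sub_sq {s : ℝ} (hs : 0 < s) (c : V) :
    Integrable (fun k : V => rexp (-s * ‖k - c‖ ^ 2)) := by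
  refine Integrable.comp_sub_right (f := fun k : V => rexp (-s * ‖k‖ ^ 2)) ?_ c
  refine (GaussianFourier.integrable_cexp_neg_mul_sq_norm_add (V := V) (b := (s : ℂ))
    (by simpa using hs) 0 0).norm.congr (Eventually.of_forall fun v => ?_)
  simp [Complex.norm_exp, ← Complex.ofReal_pow]

lemma integral_exp_neg_mul_norm_sub_sq {s : ℝ} (hs : 0 < s) (c : V) :
    ∫ k : V, rexp (-s * ‖k - c‖ ^ 2) = (π / s) ^ (finrank ℝ V / 2 : ℝ) := by
  rw [integral_sub_right_eq_self (fun k : V => rexp (-s * ‖k‖ ^ 2)) c]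
  exact GaussianFourier.integral_rexp_neg_mul_sq_norm hs

lemma integrable_exp_neg_mul_norm_sub_sq_mul_exp_neg_mul_norm_sq {r x : ℝ} (h : 0 < r + x)
    (P : V) : Integrable (fun k : V => rexp (-r * ‖P - k‖ ^ 2) * rexp (-x * ‖k‖ ^ 2)) := by
  simp_rw [exp_neg_mul_norm_sub_sq_mul_exp_neg_mul_norm_sq h.ne']
  exact (integrable_exp_neg_mul_norm_sub_sq h _).const_mul _

lemma integral_exp_neg_mul_norm_sub_sq_mul_exp_neg_mul_norm_sq {r x : ℝ} (h : 0 < r + x)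
    (P : V) :
    ∫ k : V, rexp (-r * ‖P - k‖ ^ 2) * rexp (-x * ‖k‖ ^ 2) =
      (π / (r + x)) ^ (finrank ℝ V / 2 : ℝ) * rexp (-(r * x / (r + x)) * ‖P‖ ^ 2) := by
  simp_rw [exp_neg_mul_norm_sub_sq_mul_exp_neg_mul_norm_sq h.ne']
  rw [integral_const_mul, integral_exp_neg_mul_norm_sub_sq h, mul_comm]

end Gaussian

lemma integral_rpow_mul_exp_neg_mul_sq_Ioi {β y : ℝ} (hβ : 0 < β) (hy : 0 < y) :
    ∫ x in Ioi 0, x ^ (β - 1) * rexp (-x * y ^ 2) = Gamma β * y ^ (-(2 * β)) := by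
  simp_rw [neg_mul, mul_comm _ (y ^ 2)]
  rw [integral_rpow_mul_exp_neg_mul_Ioi hβ (by positivity), one_div, mul_comm,
    ← rpow_natCast, ← rpow_neg hy.le, ← rpow_mul hy.le]
  norm_num

lemma integrableOn_rpow_mul_div_add_rpow_Ioi {β s r c : ℝ} (hβ : 0 < β) (hβs : β < s)
    (hr : 0 < r) (hc : 0 ≤ c) :
    IntegrableOn (fun x : ℝ => x ^ (β - 1) * (c / (r + x)) ^ s) (Ioi 0) := by
  have hmeas : AEStronglyMeasurable (fun x : ℝ => x ^ (β - 1) * (c / (r + x)) ^ s) := by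
    fun_prop
  rw [← Ioc_union_Ioi_eq_Ioi zero_le_one, integrableOn_union]
  constructor
  · refine (((intervalIntegral.intervalIntegrable_rpow' (by linarith : (-1 : ℝ) < β - 1)
      (a := 0) (b := 1)).1).mul_const ((c / r) ^ s)).mono' hmeas.restrict ?_
    filter_upwards [ae_restrict_mem measurableSet_Ioc] with x hx
    have hx0 : 0 < x := hx.1
    rw [norm_of_nonneg (by positivity)]
    gcongr <;> linarith
  · refine ((integrableOn_Ioi_rpow_of_lt (by linarith : β - 1 - s < -1) one_pos).const_mul
      (c ^ s)).mono' hmeas.restrict ?_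
    filter_upwards [ae_restrict_mem measurableSet_Ioi] with x hx
    have hx0 : 0 < x := one_pos.trans hx
    rw [norm_of_nonneg (by positivity)]
    calc x ^ (β - 1) * (c / (r + x)) ^ s ≤ x ^ (β - 1) * (c / x) ^ s := by
          gcongr <;> linarith
      _ = c ^ s * x ^ (β - 1 - s) := by
          rw [div_rpow hc hx0.le, rpow_sub hx0 (β - 1) s]; ring

section Subordination

variable {V : Type*} [NormedAddCommGroup V] [InnerProductSpace ℝ V] [FiniteDimensional ℝ V]
  [MeasurableSpace V] [BorelSpace V] {β r : ℝ}

lemma integrable_subordination_integrand (hβ0 : 0 < β) (hβ : β < finrank ℝ V / 2) (hr : 0 < r)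
    (P : V) :
    Integrable (Function.uncurry fun (k : V) (x : ℝ) =>
        x ^ (β - 1) * (rexp (-r * ‖P - k‖ ^ 2) * rexp (-x * ‖k‖ ^ 2)))
      (volume.prod (volume.restrict (Ioi 0))) := by
  have hrx : ∀ x ∈ Ioi (0 : ℝ), 0 < r + x := fun x hx => add_pos hr hx
  rw [integrable_prod_iff' (by fun_prop)]
  constructor
  · filter_upwards [ae_restrict_mem measurableSet_Ioi] with x hx
    exact (integrable_exp_neg_mul_norm_sub_sq_mul_exp_neg_mul_norm_sq (hrx x hx) P).const_mul
      (x ^ (β - 1))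
  have hbound : IntegrableOn (fun x : ℝ => x ^ (β - 1) * (π / (r + x)) ^ (finrank ℝ V / 2 : ℝ)
      * rexp (-(r * x / (r + x)) * ‖P‖ ^ 2)) (Ioi 0) := by
    refine (integrableOn_rpow_mul_div_add_rpow_Ioi hβ0 hβ hr pi_pos.le).mono' (by fun_prop) ?_
    filter_upwards [ae_restrict_mem measurableSet_Ioi] with x (hx : 0 < x)
    rw [norm_of_nonneg (by positivity)]
    refine mul_le_of_le_one_right (by positivity) (exp_le_one_iff.2 ?_)
    have : 0 ≤ r * x / (r + x) := by positivity
    nlinarith [sq_nonneg ‖P‖]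
  refine hbound.congr_fun_ae ?_
  filter_upwards [ae_restrict_mem measurableSet_Ioi] with x (hx : 0 < x)
  simp only [Function.uncurry_apply_pair, norm_mul, norm_of_nonneg (exp_pos _).le,
    norm_of_nonneg (rpow_nonneg hx.le _)]
  rw [integral_const_mul, integral_exp_neg_mul_norm_sub_sq_mul_exp_neg_mul_norm_sq (hrx x hx),
    mul_assoc]

theorem integrable_and_integral_exp_neg_mul_norm_sub_sq_mul_rpow (hβ0 : 0 < β)
    (hβ : β < finrank ℝ V / 2) (hr : 0 < r) (P : V) :
    Integrable (fun k : V => rexp (-r * ‖P - k‖ ^ 2) * ‖k‖ ^ (-(2 * β))) ∧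
      ∫ k : V, rexp (-r * ‖P - k‖ ^ 2) * ‖k‖ ^ (-(2 * β)) =
        ∫ x in Ioi 0, (Gamma β)⁻¹ * (x ^ (β - 1) * (π / (r + x)) ^ (finrank ℝ V / 2 : ℝ))
          * rexp (-(r * x / (r + x)) * ‖P‖ ^ 2) := by
  have hF := integrable_subordination_integrand hβ0 hβ hr P
  have : Nontrivial V := finrank_pos_iff.1 (by
    have : (0 : ℝ) < finrank ℝ V := by linarith
    exact_mod_cast this)
  have hsub : ∀ᵐ k : V ∂volume, rexp (-r * ‖P - k‖ ^ 2) * ‖k‖ ^ (-(2 * β)) =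
      (Gamma β)⁻¹ *
        ∫ x in Ioi 0, x ^ (β - 1) * (rexp (-r * ‖P - k‖ ^ 2) * rexp (-x * ‖k‖ ^ 2)) := by
    filter_upwards [volume.ae_ne 0] with k hk
    simp_rw [mul_left_comm _ (rexp (-r * ‖P - k‖ ^ 2))]
    rw [integral_const_mul, integral_rpow_mul_exp_neg_mul_sq_Ioi hβ0 (norm_pos_iff.2 hk),
      mul_left_comm, inv_mul_cancel_left₀ (Gamma_pos_of_pos hβ0).ne']
  refine ⟨(hF.integral_prod_left.const_mul _).congr (hsub.mono fun _ h => h.symm), ?_⟩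
  rw [integral_congr_ae hsub, integral_const_mul, integral_integral_swap hF,
    ← integral_const_mul]
  refine setIntegral_congr_fun measurableSet_Ioi fun x (hx : 0 < x) => ?_
  rw [integral_const_mul, integral_exp_neg_mul_norm_sub_sq_mul_exp_neg_mul_norm_sq (add_pos hr hx)]
  ring

end Subordination

lemma integral_map_withDensity_ofReal {α : Type*} [MeasurableSpace α] {ν : Measure α}
    {w φ : α → ℝ} (hw : Measurable w) (hw0 : ∀ᵐ x ∂ν, 0 ≤ w x) (hφ : Measurable φ) {g : ℝ → ℝ}
    (hg : Continuous g) :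
    ∫ l, g l ∂(ν.withDensity fun x => ENNReal.ofReal (w x)).map φ = ∫ x, w x * g (φ x) ∂ν := by
  rw [integral_map hφ.aemeasurable hg.aestronglyMeasurable,
    integral_withDensity_eq_integral_toReal_smul (by fun_prop)
      (ae_of_all _ fun _ => ENNReal.ofReal_lt_top)]
  exact integral_congr_ae (hw0.mono fun x hx => by simp [ENNReal.toReal_ofReal hx])

section LaplaceRepresentation

variable {V : Type*} [NormedAddCommGroup V] [InnerProductSpace ℝ V] [FiniteDimensional ℝ V]
  [MeasurableSpace V] [BorelSpace V] {β r : ℝ}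

theorem exists_laplace_measure_of_pos (hβ0 : 0 < β) (hβ : β < finrank ℝ V / 2)
    (hr : 0 < r) :
    ∃ μ : Measure ℝ, IsFiniteMeasure μ ∧ (∀ᵐ l ∂μ, l ∈ Icc 0 r) ∧ ∀ P : V,
      Integrable (fun k : V => rexp (-r * ‖P - k‖ ^ 2) * ‖k‖ ^ (-(2 * β))) ∧
      ∫ k : V, rexp (-r * ‖P - k‖ ^ 2) * ‖k‖ ^ (-(2 * β)) = ∫ l, rexp (-l * ‖P‖ ^ 2) ∂μ := by
  set w : ℝ → ℝ := fun x =>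
    (Gamma β)⁻¹ * (x ^ (β - 1) * (π / (r + x)) ^ (finrank ℝ V / 2 : ℝ))
  have hw : IntegrableOn w (Ioi 0) :=
    (integrableOn_rpow_mul_div_add_rpow_Ioi hβ0 hβ hr pi_pos.le).const_mul _
  have hw0 : ∀ᵐ x ∂volume.restrict (Ioi 0), 0 ≤ w x := by
    filter_upwards [ae_restrict_mem measurableSet_Ioi] with x (hx : 0 < x)
    have := Gamma_pos_of_pos hβ0
    positivity
  have hφ : Measurable fun x : ℝ => r * x / (r + x) := by fun_prop
  refine ⟨((volume.restrict (Ioi 0)).withDensity fun x => ENNReal.ofReal (w x)).map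
    (fun x => r * x / (r + x)), ?_, ?_, fun P => ?_⟩
  · have := isFiniteMeasure_withDensity_ofReal hw.hasFiniteIntegral
    infer_instance
  · refine (ae_map_iff hφ.aemeasurable measurableSet_Icc).2
      (withDensity_absolutelyContinuous _ _ |>.ae_le ?_)
    filter_upwards [ae_restrict_mem measurableSet_Ioi] with x (hx : 0 < x)
    refine ⟨by positivity, (div_le_iff₀ (by positivity)).2 ?_⟩
    nlinarith
  obtain ⟨hint, heq⟩ := integrable_and_integral_exp_neg_mul_norm_sub_sq_mul_rpow hβ0 hβ hr P
  rw [heq, integral_map_withDensity_ofReal (by fun_prop) hw0 hφ (by fun_prop)]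
  exact ⟨hint, rfl⟩

theorem exists_laplace_measure (hβ0 : 0 ≤ β) (hβ : β < finrank ℝ V / 2) (hr : 0 < r) :
    ∃ μ : Measure ℝ, IsFiniteMeasure μ ∧ (∀ᵐ l ∂μ, l ∈ Icc 0 r) ∧ ∀ P : V,
      Integrable (fun k : V => rexp (-r * ‖P - k‖ ^ 2) * ‖k‖ ^ (-(2 * β))) ∧
      ∫ k : V, rexp (-r * ‖P - k‖ ^ 2) * ‖k‖ ^ (-(2 * β)) = ∫ l, rexp (-l * ‖P‖ ^ 2) ∂μ := by
  rcases hβ0.eq_or_lt with rfl | hβ0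
  · simp only [mul_zero, neg_zero, rpow_zero, mul_one]
    refine ⟨((π / r) ^ (finrank ℝ V / 2 : ℝ)).toNNReal • Measure.dirac 0, inferInstance,
      ?_, fun P => ⟨?_, ?_⟩⟩
    · exact Measure.ae_smul_measure ((ae_dirac_iff measurableSet_Icc).2 ⟨le_rfl, hr.le⟩) _
    · simp_rw [norm_sub_rev P]
      exact integrable_exp_neg_mul_norm_sub_sq hr P
    · simp_rw [norm_sub_rev P]
      rw [integral_exp_neg_mul_norm_sub_sq hr, integral_smul_nnreal_measure, integral_dirac,
        NNReal.smul_def, smul_eq_mul, neg_zero, zero_mul, exp_zero, mul_one,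
        Real.coe_toNNReal _ (by positivity)]
  · exact exists_laplace_measure_of_pos hβ0 hβ hr

end LaplaceRepresentation

theorem gaussian_inverse_power_completely_monotone_general
    (d : ℕ) (β r : ℝ) (hβ0 : 0 ≤ β) (hβ : β < d / 2) (hr : 0 < r) :
    (∀ P : EuclideanSpace ℝ (Fin d),
      Integrable (fun k : EuclideanSpace ℝ (Fin d) =>
        Real.exp (-r * ‖P - k‖ ^ 2) * ‖k‖ ^ (-(2 * β)))) ∧
    (∃ μ : Measure ℝ, IsFiniteMeasure μ ∧ μ (Set.Iio 0) = 0 ∧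
      ∀ P : EuclideanSpace ℝ (Fin d),
        ∫ k : EuclideanSpace ℝ (Fin d), Real.exp (-r * ‖P - k‖ ^ 2) * ‖k‖ ^ (-(2 * β)) =
          ∫ l : ℝ, Real.exp (-l * ‖P‖ ^ 2) ∂μ) ∧
    ∃ g : ℝ → ℝ,
      (∀ P : EuclideanSpace ℝ (Fin d),
        ∫ k : EuclideanSpace ℝ (Fin d), Real.exp (-r * ‖P - k‖ ^ 2) * ‖k‖ ^ (-(2 * β)) =
          g (‖P‖ ^ 2)) ∧
      ∀ m : ℕ, ∀ x : ℝ, 0 < x → 0 ≤ (-1 : ℝ) ^ m * iteratedDeriv m g x := by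
  obtain ⟨μ, hμ, hsupp, hrepr⟩ := exists_laplace_measure (V := EuclideanSpace ℝ (Fin d)) hβ0
    (by simpa using hβ) hr
  refine ⟨fun P => (hrepr P).1, ⟨μ, hμ, ?_, fun P => (hrepr P).2⟩,
    fun t => ∫ l, rexp (-l * t) ∂μ, fun P => (hrepr P).2,
    fun m x _ => neg_one_pow_mul_iteratedDeriv_integral_exp_neg_mul_nonneg hsupp m x⟩
  exact measure_mono_null (fun l (hl : l < 0) (hmem : l ∈ Icc 0 r) => hl.not_ge hmem.1)
    (ae_iff.1 hsupp)

/-- For `0 ≤ β < d/2` and `r > 0`, the integral `∫ e^{-r|P-k|²} |k|^{-2β} dk` over `ℝ^d` is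
finite for every `P`, it is the Laplace transform in `|P|²` of a finite positive measure on
`[0,∞)`, and consequently `|P|² ↦ ∫ e^{-r|P-k|²} |k|^{-2β} dk` is completely monotone. -/
theorem gaussian_inverse_power_completely_monotone
    (d : ℕ) (hd : 1 ≤ d) (β r : ℝ) (hβ0 : 0 ≤ β) (hβ : β < d / 2) (hr : 0 < r) :
    (∀ P : EuclideanSpace ℝ (Fin d),
      Integrable (fun k : EuclideanSpace ℝ (Fin d) =>
        Real.exp (-r * ‖P - k‖ ^ 2) * ‖k‖ ^ (-(2 * β)))) ∧
    (∃ μ : Measure ℝ, IsFiniteMeasure μ ∧ μ (Set.Iio 0) = 0 ∧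
      ∀ P : EuclideanSpace ℝ (Fin d),
        ∫ k : EuclideanSpace ℝ (Fin d), Real.exp (-r * ‖P - k‖ ^ 2) * ‖k‖ ^ (-(2 * β)) =
          ∫ l : ℝ, Real.exp (-l * ‖P‖ ^ 2) ∂μ) ∧
    ∃ g : ℝ → ℝ,
      (∀ P : EuclideanSpace ℝ (Fin d),
        ∫ k : EuclideanSpace ℝ (Fin d), Real.exp (-r * ‖P - k‖ ^ 2) * ‖k‖ ^ (-(2 * β)) =
          g (‖P‖ ^ 2)) ∧
      ∀ m : ℕ, ∀ x : ℝ, 0 < x → 0 ≤ (-1 : ℝ) ^ m * iteratedDeriv m g x :=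
  gaussian_inverse_power_completely_monotone_general d β r hβ0 hβ hr
end
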